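/- arXiv:1504.06765 — 2 statements merged into one kernel-verified Lean document; each statement's English description precedes it below -/
import Mathlib

section
/- Bound on the computational error by the discrete residual. Fix p ≥ 0 and nodes 0 ≤ τ₀ < ⋯ < τ_p ≤ 1. There exists a constant C_p′, depending only on p and the nodes, with the following property. Let 0 = t₀ < t₁ < ⋯ < t_M = T be a partition with Δt_m = t_m − t_{m−1}, let z : [0,T] → ℝ^N be continuous, and for each m and k = 0,…,p let R̄_k^m ∈ ℝ^N. Then |Σ_{m=1}^{M} Σ_{k=0}^{p} ⟨z(t_{m−1} + τ_k Δt_m), R̄_k^m⟩| ≤ C_p′ · (max_{0≤k≤p, 1≤m≤M} Δt_m^{−1}‖R̄_k^m‖) · ∫₀ᵀ ‖(πz)(t)‖ dt, where (πz)(t) = Σ_{k=0}^{p} z(t_{m−1} + τ_k Δt_m) λ_k((t − t_{m−1})/Δt_m) for t ∈ (t_{m−1}, t_m] and {λ_k} is the Lagrange basis of polynomials of degree ≤ p on [0,1] with λ_i(τ_j) = δ_{ij}. -/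
open MeasureTheory
open scoped InnerProductSpace

/-- The Lagrange nodal basis `{λ_k}` of polynomials of degree `≤ p` on `[0,1]`
associated with nodes `τ₀ < ⋯ < τ_p`, i.e. `λ_i(τ_j) = δ_{ij}`. -/
noncomputable def lagB (p : ℕ) (τ : Fin (p + 1) → ℝ) (k : Fin (p + 1)) (x : ℝ) : ℝ :=
  ∏ j ∈ Finset.univ.erase k, (x - τ j) / (τ k - τ j)

/-- The degree-`p` Lagrange interpolant of `z` on the interval `[a, b]` at the
nodal points `a + τ_k (b − a)`. -/
noncomputable def interpOn {N : ℕ} (p : ℕ) (τ : Fin (p + 1) → ℝ)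
    (z : ℝ → EuclideanSpace ℝ (Fin N)) (a b s : ℝ) : EuclideanSpace ℝ (Fin N) :=
  ∑ k, lagB p τ k ((s - a) / (b - a)) • z (a + τ k * (b - a))

/-!
The Lagrange basis polynomials are linearly independent and a nonzero polynomial does not vanish
on `[0, 1]`, so their Gram matrix in `L²(0, 1)` is positive definite; its inverse yields dual
polynomials `Q_k` with `∫₀¹ Q_k λ_j = δ_kj`. Testing `Σ_j λ_j c_j` against `Q_k` recovers `c_k`,
whence `Σ_k ‖c_k‖ ≤ C ∫₀¹ ‖Σ_j λ_j c_j‖` with `C` the sum of bounds for `|Q_k|` on `[0, 1]`, a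
constant that does not see the target space (so not `N` either). Rescaling to `[t_m, t_{m+1}]`
turns this into `Δt_m Σ_k ‖z(t_m + τ_k Δt_m)‖ ≤ C ∫ ‖πz‖`, and Cauchy–Schwarz with
`‖R̄_k^m‖ ≤ S Δt_m`, `S` the maximum in the statement, sums up to the bound.
-/

open Polynomial Finset
open scoped Matrix

namespace Polynomial

noncomputable def integralOn (a b : ℝ) : ℝ[X] →ₗ[ℝ] ℝ where
  toFun P := ∫ x in a..b, P.eval x
  map_add' P Q := by
    simp only [eval_add]
    exact intervalIntegral.integral_add (P.continuous.intervalIntegrable a b)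
      (Q.continuous.intervalIntegrable a b)
  map_smul' c P := by simp

theorem integralOn_apply (a b : ℝ) (P : ℝ[X]) : integralOn a b P = ∫ x in a..b, P.eval x :=
  rfl

theorem integralOn_sq_pos {a b : ℝ} (hab : a < b) {Q : ℝ[X]} (hQ : Q ≠ 0) :
    0 < integralOn a b (Q ^ 2) := by
  obtain ⟨x, hx, hQx⟩ : ∃ x ∈ Set.Icc a b, Q.eval x ≠ 0 := by
    by_contra! h
    exact hQ (Q.eq_zero_of_infinite_isRoot ((Set.Icc_infinite hab).mono h))
  simp only [integralOn_apply, eval_pow]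
  exact intervalIntegral.integral_pos hab (Q.continuous.pow 2).continuousOn
    (fun y _ => sq_nonneg _) ⟨x, hx, by positivity⟩

variable {ι : Type*} [Fintype ι]

noncomputable def gramOn (a b : ℝ) (P : ι → ℝ[X]) : Matrix ι ι ℝ :=
  Matrix.of fun i j => integralOn a b (P i * P j)

theorem dotProduct_gramOn_mulVec (a b : ℝ) (P : ι → ℝ[X]) (x : ι → ℝ) :
    x ⬝ᵥ gramOn a b P *ᵥ x = integralOn a b ((∑ i, x i • P i) ^ 2) := by
  rw [sq, sum_mul_sum]
  simp only [smul_mul_smul, map_sum, map_smul, smul_eq_mul, dotProduct, Matrix.mulVec, gramOn,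
    Matrix.of_apply, mul_sum]
  exact sum_congr rfl fun i _ => sum_congr rfl fun j _ => by ring

theorem posDef_gramOn {a b : ℝ} (hab : a < b) {P : ι → ℝ[X]} (hP : LinearIndependent ℝ P) :
    (gramOn a b P).PosDef := by
  refine Matrix.posDef_iff_dotProduct_mulVec.2 ⟨?_, fun x hx => ?_⟩
  · ext i j
    simp [gramOn, mul_comm]
  · rw [star_trivial, dotProduct_gramOn_mulVec]
    exact integralOn_sq_pos hab fun h => hx <| by
      ext i; exact Fintype.linearIndependent_iff.1 hP x h i

theorem exists_dual_integralOn [DecidableEq ι] {a b : ℝ} (hab : a < b) {P : ι → ℝ[X]}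
    (hP : LinearIndependent ℝ P) :
    ∃ Q : ι → ℝ[X], ∀ k j, integralOn a b (Q k * P j) = if k = j then 1 else 0 := by
  set G := gramOn a b P
  have hG : G⁻¹ * G = 1 :=
    Matrix.nonsing_inv_mul _ ((Matrix.isUnit_iff_isUnit_det _).1 (posDef_gramOn hab hP).isUnit)
  refine ⟨fun k => ∑ i, G⁻¹ k i • P i, fun k j => ?_⟩
  rw [← Matrix.one_apply, ← hG, Matrix.mul_apply]
  simp [sum_mul, G, gramOn]

theorem exists_sum_norm_le_integral_norm {a b : ℝ} (hab : a < b) {P : ι → ℝ[X]}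
    (hP : LinearIndependent ℝ P) :
    ∃ C, ∀ (E : Type*) [NormedAddCommGroup E] [NormedSpace ℝ E] [CompleteSpace E]
      (c : ι → E), ∑ k, ‖c k‖ ≤ C * ∫ x in a..b, ‖∑ j, (P j).eval x • c j‖ := by
  classical
  obtain ⟨Q, hQ⟩ := exists_dual_integralOn hab hP
  choose B hB using fun k =>
    (isCompact_Icc (a := a) (b := b)).exists_bound_of_continuousOn (Q k).continuous.continuousOn
  refine ⟨∑ k, B k, fun E _ _ _ c => ?_⟩
  set q := fun x => ∑ j, (P j).eval x • c j
  have hc : ∀ k, c k = ∫ x in a..b, (Q k).eval x • q x := by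
    intro k
    simp only [q, smul_sum, smul_smul]
    rw [intervalIntegral.integral_finsetSum fun j _ =>
      (by fun_prop : Continuous _).intervalIntegrable _ _]
    simp_rw [intervalIntegral.integral_smul_const, ← eval_mul, ← integralOn_apply, hQ, ite_smul,
      one_smul, zero_smul, sum_ite_eq, mem_univ, if_true]
  have hnorm : ∀ k, ‖c k‖ ≤ B k * ∫ x in a..b, ‖q x‖ := by
    intro k
    rw [hc k, ← intervalIntegral.integral_const_mul]
    refine (intervalIntegral.norm_integral_le_integral_norm hab.le).trans ?_
    refine intervalIntegral.integral_mono_on hab.le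
      ((by fun_prop : Continuous _).intervalIntegrable _ _)
      ((by fun_prop : Continuous _).intervalIntegrable _ _) fun x hx => ?_
    rw [norm_smul]
    exact mul_le_mul_of_nonneg_right (hB k x hx) (norm_nonneg _)
  rw [sum_mul]
  exact sum_le_sum fun k _ => hnorm k

end Polynomial

theorem Lagrange.linearIndependent_basis {ι : Type*} [Fintype ι] [DecidableEq ι] {v : ι → ℝ}
    (hv : Function.Injective v) : LinearIndependent ℝ (Lagrange.basis univ v) := by
  refine Fintype.linearIndependent_iff.2 fun g hg i => ?_
  have hinterp : Lagrange.interpolate univ v g = 0 := by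
    rw [Lagrange.interpolate_apply, ← hg]
    simp_rw [smul_eq_C_mul]
  simpa [hinterp, eq_comm] using Lagrange.eval_interpolate_at_node g hv.injOn (mem_univ i)

theorem lagB_eq_eval_basis (p : ℕ) (τ : Fin (p + 1) → ℝ) (k : Fin (p + 1)) (x : ℝ) :
    lagB p τ k x = (Lagrange.basis univ τ k).eval x := by
  simp [lagB, Lagrange.basis, Lagrange.basisDivisor, eval_prod, div_eq_inv_mul]

theorem intervalIntegral.integral_comp_sub_div_sub {E : Type*} [NormedAddCommGroup E]
    [NormedSpace ℝ E] (f : ℝ → E) {a b : ℝ} (hab : a ≠ b) :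
    ∫ s in a..b, f ((s - a) / (b - a)) = (b - a) • ∫ x in (0 : ℝ)..1, f x := by
  have hba : b - a ≠ 0 := sub_ne_zero.2 hab.symm
  rw [intervalIntegral.integral_comp_sub_right (fun y => f (y / (b - a))),
    intervalIntegral.integral_comp_div f hba, sub_self, zero_div, div_self hba]

theorem exists_mul_sum_norm_le_integral_norm_interpOn {p : ℕ} {τ : Fin (p + 1) → ℝ}
    (hτ : Function.Injective τ) :
    ∃ C, ∀ (N : ℕ) (z : ℝ → EuclideanSpace ℝ (Fin N)) (a b : ℝ), a < b →
      (b - a) * ∑ k, ‖z (a + τ k * (b - a))‖ ≤ C * ∫ s in a..b, ‖interpOn p τ z a b s‖ := by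
  obtain ⟨C, hC⟩ :=
    exists_sum_norm_le_integral_norm zero_lt_one (Lagrange.linearIndependent_basis hτ)
  refine ⟨C, fun N z a b hab => ?_⟩
  simp only [interpOn, lagB_eq_eval_basis]
  rw [intervalIntegral.integral_comp_sub_div_sub (fun x =>
    ‖∑ k, (Lagrange.basis univ τ k).eval x • z (a + τ k * (b - a))‖) hab.ne,
    smul_eq_mul, mul_left_comm]
  exact mul_le_mul_of_nonneg_left (hC _ _) (sub_nonneg.2 hab.le)

theorem abs_sum_inner_le_of_norm_div_le {ι E : Type*} [Fintype ι] [NormedAddCommGroup E]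
    [InnerProductSpace ℝ E] {u R : ι → E} {h S I : ℝ} (hh : 0 < h) (hS : 0 ≤ S)
    (hR : ∀ k, ‖R k‖ / h ≤ S) (hu : h * ∑ k, ‖u k‖ ≤ I) :
    |∑ k, ⟪u k, R k⟫_ℝ| ≤ S * I :=
  calc |∑ k, ⟪u k, R k⟫_ℝ|
      ≤ ∑ k, ‖u k‖ * ‖R k‖ :=
        (abs_sum_le_sum_abs _ _).trans (sum_le_sum fun k _ => abs_real_inner_le_norm _ _)
    _ ≤ ∑ k, ‖u k‖ * (S * h) :=
        sum_le_sum fun k _ => mul_le_mul_of_nonneg_left ((div_le_iff₀ hh).1 (hR k)) (norm_nonneg _)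
    _ = S * (h * ∑ k, ‖u k‖) := by rw [← sum_mul]; ring
    _ ≤ S * I := mul_le_mul_of_nonneg_left hu hS

theorem computational_error_bound_general (p : ℕ) (τ : Fin (p + 1) → ℝ)
    (hτ : StrictMono τ) :
    ∃ Cp' : ℝ,
      ∀ (N M : ℕ) (hM : 0 < M) (T : ℝ)
        (t : ℕ → ℝ) (_ht0 : t 0 = 0) (_htM : t M = T)
        (_htlt : ∀ m < M, t m < t (m + 1))
        (z : ℝ → EuclideanSpace ℝ (Fin N)) (_hz : ContinuousOn z (Set.Icc 0 T))
        (Rbar : ℕ → Fin (p + 1) → EuclideanSpace ℝ (Fin N)),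
        |∑ m ∈ Finset.range M, ∑ k, ⟪z (t m + τ k * (t (m + 1) - t m)), Rbar m k⟫_ℝ|
          ≤ Cp'
            * ((Finset.range M).sup' (Finset.nonempty_range_iff.mpr hM.ne')
                fun m => Finset.univ.sup' Finset.univ_nonempty
                  fun k : Fin (p + 1) => ‖Rbar m k‖ / (t (m + 1) - t m))
            * ∑ m ∈ Finset.range M,
                ∫ s in t m..t (m + 1), ‖interpOn p τ z (t m) (t (m + 1)) s‖ := by
  obtain ⟨C, hC⟩ := exists_mul_sum_norm_le_integral_norm_interpOn hτ.injective
  refine ⟨C, fun N M hM T t _ _ htlt z _ Rbar => ?_⟩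
  rw [mul_sum]
  refine (abs_sum_le_sum_abs _ _).trans (sum_le_sum fun m hm => ?_)
  have hΔ : 0 < t (m + 1) - t m := sub_pos.2 (htlt m (mem_range.1 hm))
  rw [mul_comm C, mul_assoc]
  refine abs_sum_inner_le_of_norm_div_le hΔ ?_ (fun k => ?_) (hC N z _ _ (sub_pos.1 hΔ))
  · exact le_sup'_of_le _ hm (le_sup'_of_le _ (mem_univ 0) (div_nonneg (norm_nonneg _) hΔ.le))
  · exact le_sup'_of_le _ hm (le_sup'_of_le _ (mem_univ k) le_rfl)

/-- **Bound on the computational error by the discrete residual.**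
There is a constant `C_p'`, depending only on `p` and the nodes, such that
`|Σ_m Σ_k ⟨z(t_{m−1} + τ_k Δt_m), R̄_k^m⟩| ≤ C_p' · max_{k,m} Δt_m^{−1}‖R̄_k^m‖ · ∫₀ᵀ ‖πz‖ dt`,
where `∫₀ᵀ ‖πz‖ dt = Σ_m ∫_{t_{m−1}}^{t_m} ‖πz‖ dt` and `πz` is the piecewise Lagrange
interpolant of degree `p` on the partition. -/
theorem computational_error_bound (p : ℕ) (τ : Fin (p + 1) → ℝ)
    (hτ : StrictMono τ) (hτ0 : 0 ≤ τ 0) (hτ1 : τ (Fin.last p) ≤ 1) :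
    ∃ Cp' : ℝ,
      ∀ (N M : ℕ) (hM : 0 < M) (T : ℝ)
        (t : ℕ → ℝ) (_ht0 : t 0 = 0) (_htM : t M = T)
        (_htlt : ∀ m < M, t m < t (m + 1))
        (z : ℝ → EuclideanSpace ℝ (Fin N)) (_hz : ContinuousOn z (Set.Icc 0 T))
        (Rbar : ℕ → Fin (p + 1) → EuclideanSpace ℝ (Fin N)),
        |∑ m ∈ Finset.range M, ∑ k, ⟪z (t m + τ k * (t (m + 1) - t m)), Rbar m k⟫_ℝ|
          ≤ Cp'
            * ((Finset.range M).sup' (Finset.nonempty_range_iff.mpr hM.ne')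
                fun m => Finset.univ.sup' Finset.univ_nonempty
                  fun k : Fin (p + 1) => ‖Rbar m k‖ / (t (m + 1) - t m))
            * ∑ m ∈ Finset.range M,
                ∫ s in t m..t (m + 1), ‖interpOn p τ z (t m) (t (m + 1)) s‖ :=
  computational_error_bound_general p τ hτ
end

section
/- Theorem 3 (root-mean-square bound on the computational error under a random round-off model). Fix p ≥ 0 and nodes 0 ≤ τ₀ < ⋯ < τ_p ≤ 1. There exists a constant C_p′, depending only on p and the nodes, with the following property. Let 0 = t₀ < ⋯ < t_M = T be a partition with Δt_m = t_m − t_{m−1}, let z : [0,T] → ℝ^N be continuous, let ε > 0, and on a probability space let (X_{mki})_{1≤m≤M, 0≤k≤p, 1≤i≤N} be pairwise independent random variables each taking the values +1 and −1 with probability 1/2 each. Define the random vectors R̄_k^m ∈ ℝ^N by (R̄_k^m)_i = ε X_{mki} and the random variable E_C = Σ_{m=1}^{M} Σ_{k=0}^{p} ⟨z(t_{m−1} + τ_k Δt_m), R̄_k^m⟩. Then E[E_C²] = ε² Σ_{m=1}^{M} Σ_{k=0}^{p} ‖z(t_{m−1} + τ_k Δt_m)‖², and consequently (E[E_C²])^{1/2}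 ≤ √(C_p′) · (ε / √(min_{1≤m≤M} Δt_m)) · (∫₀ᵀ ‖(πz)(t)‖² dt)^{1/2}. -/
/-!
`E_C = ∑ ε z_{mki} X_{mki}` is a sum of centred, pairwise independent terms, so its second
moment is the sum of their variances `ε² z_{mki}²`.

For the bound, `v ↦ ∫₀¹ (∑ₖ vₖ λₖ)²` is a continuous quadratic form on `ℝ^{p+1}`, positive
definite because `∑ₖ vₖ λₖ(τⱼ) = vⱼ` and the nodes lie in `[0,1]`; by compactness of the unit
sphere it dominates `c ‖v‖²` for some `c > 0`. Applied coordinatewise and rescaled to each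
subinterval, this gives `∫_{t_m}^{t_{m+1}} ‖πz‖² ≥ c Δt_m ∑ₖ ‖z(t_m + τₖ Δt_m)‖²`, so
`C_p' = c⁻¹` works.
-/

open MeasureTheory
open scoped InnerProductSpace

open ProbabilityTheory

section Coercive

variable {E : Type*} [NormedAddCommGroup E] [NormedSpace ℝ E] [FiniteDimensional ℝ E]

theorem exists_pos_mul_norm_sq_le_of_pos_of_homogeneous {Q : E → ℝ} (hQc : Continuous Q)
    (hQsmul : ∀ (a : ℝ) v, Q (a • v) = a ^ 2 * Q v) (hQpos : ∀ v, v ≠ 0 → 0 < Q v) :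
    ∃ c > 0, ∀ v, c * ‖v‖ ^ 2 ≤ Q v := by
  have hQ0 : Q 0 = 0 := by simpa using hQsmul 0 0
  rcases subsingleton_or_nontrivial E with hE | hE
  · exact ⟨1, one_pos, fun v => by simp [Subsingleton.elim v 0, hQ0]⟩
  obtain ⟨v₀, hv₀, hmin⟩ := (isCompact_sphere (0 : E) 1).exists_isMinOn
    (NormedSpace.sphere_nonempty.mpr zero_le_one) hQc.continuousOn
  have hv₀ : ‖v₀‖ = 1 := by simpa using hv₀
  refine ⟨Q v₀, hQpos v₀ (norm_ne_zero_iff.mp (by simp [hv₀])), fun v => ?_⟩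
  rcases eq_or_ne v 0 with rfl | hv
  · simp [hQ0]
  have hnv : ‖v‖ ≠ 0 := norm_ne_zero_iff.mpr hv
  have hu : ‖v‖⁻¹ • v ∈ Metric.sphere (0 : E) 1 := by simp [norm_smul, hnv]
  calc Q v₀ * ‖v‖ ^ 2 ≤ Q (‖v‖⁻¹ • v) * ‖v‖ ^ 2 := by gcongr; exact hmin hu
    _ = Q v := by rw [hQsmul, mul_comm, ← mul_assoc, inv_pow, mul_inv_cancel₀ (by positivity),
        one_mul]

end Coercive

section Lagrange

variable {p : ℕ} {τ : Fin (p + 1) → ℝ}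

variable (p τ) in
theorem continuous_lagB (k : Fin (p + 1)) :
    Continuous (lagB p τ k) :=
  continuous_finsetProd _ fun _ _ => (continuous_id.sub continuous_const).div_const _

theorem lagB_apply_node (hτ : Function.Injective τ) (k j : Fin (p + 1)) :
    lagB p τ k (τ j) = if j = k then 1 else 0 := by
  unfold lagB
  split_ifs with hjk
  · subst hjk
    refine Finset.prod_eq_one fun i hi => div_self (sub_ne_zero.mpr fun h => ?_)
    exact (Finset.mem_erase.mp hi).1 (hτ h).symm
  · exact Finset.prod_eq_zero (Finset.mem_erase.mpr ⟨hjk, Finset.mem_univ j⟩) (by simp)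

theorem sum_mul_lagB_apply_node (hτ : Function.Injective τ) (v : Fin (p + 1) → ℝ)
    (j : Fin (p + 1)) : ∑ k, v k * lagB p τ k (τ j) = v j := by
  simp [lagB_apply_node hτ]

variable (p τ) in
noncomputable def lagrangeGramForm (v : EuclideanSpace ℝ (Fin (p + 1))) : ℝ :=
  ∫ x in (0 : ℝ)..1, (∑ k, v k * lagB p τ k x) ^ 2

theorem continuous_lagrangeGramForm : Continuous (lagrangeGramForm p τ) := by
  unfold lagrangeGramForm
  have := continuous_lagB p τ
  fun_prop

theorem lagrangeGramForm_smul (a : ℝ) (v : EuclideanSpace ℝ (Fin (p + 1))) :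
    lagrangeGramForm p τ (a • v) = a ^ 2 * lagrangeGramForm p τ v := by
  simp only [lagrangeGramForm, PiLp.smul_apply, smul_eq_mul, mul_assoc, ← Finset.mul_sum,
    mul_pow, intervalIntegral.integral_const_mul]

theorem lagrangeGramForm_pos (hτ : StrictMono τ) (hτ0 : 0 ≤ τ 0) (hτ1 : τ (Fin.last p) ≤ 1)
    {v : EuclideanSpace ℝ (Fin (p + 1))} (hv : v ≠ 0) : 0 < lagrangeGramForm p τ v := by
  obtain ⟨j, hj⟩ : ∃ j, v j ≠ 0 := by
    by_contra! h
    exact hv (by ext j; simp [h j])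
  have hτj : τ j ∈ Set.Icc (0 : ℝ) 1 :=
    ⟨hτ0.trans (hτ.monotone (Fin.zero_le j)), (hτ.monotone (Fin.le_last j)).trans hτ1⟩
  refine intervalIntegral.integral_pos zero_lt_one ?_ (fun x _ => sq_nonneg _) ⟨τ j, hτj, ?_⟩
  · have := continuous_lagB p τ
    exact Continuous.continuousOn (by fun_prop)
  · rw [sum_mul_lagB_apply_node hτ.injective]
    positivity

theorem exists_pos_mul_norm_sq_le_lagrangeGramForm (hτ : StrictMono τ) (hτ0 : 0 ≤ τ 0)
    (hτ1 : τ (Fin.last p) ≤ 1) :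
    ∃ c > 0, ∀ v, c * ‖v‖ ^ 2 ≤ lagrangeGramForm p τ v :=
  exists_pos_mul_norm_sq_le_of_pos_of_homogeneous continuous_lagrangeGramForm
    lagrangeGramForm_smul fun _ hv => lagrangeGramForm_pos hτ hτ0 hτ1 hv

end Lagrange

section Interpolation

variable {p : ℕ} {τ : Fin (p + 1) → ℝ}

theorem integral_norm_sq_interpOn {N : ℕ} (z : ℝ → EuclideanSpace ℝ (Fin N)) {a b : ℝ}
    (hab : a ≠ b) :
    ∫ s in a..b, ‖interpOn p τ z a b s‖ ^ 2
      = (b - a) * ∫ x in (0 : ℝ)..1, ‖∑ k, lagB p τ k x • z (a + τ k * (b - a))‖ ^ 2 := by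
  have hba : b - a ≠ 0 := sub_ne_zero.mpr hab.symm
  have hcomp : ∀ s, (s - a) / (b - a) = -(a * (b - a)⁻¹) + (b - a)⁻¹ * s := fun s => by
    field_simp; ring
  simp only [interpOn, hcomp]
  rw [intervalIntegral.integral_comp_add_mul
    (fun x => ‖∑ k, lagB p τ k x • z (a + τ k * (b - a))‖ ^ 2) (inv_ne_zero hba), inv_inv,
    smul_eq_mul]
  congr 3 <;> field_simp <;> ring

theorem mul_sum_norm_sq_le_integral_norm_sq_sum_lagB {ι : Type*} [Fintype ι] {c : ℝ}
    (hgram : ∀ v, c * ‖v‖ ^ 2 ≤ lagrangeGramForm p τ v) (w : Fin (p + 1) → EuclideanSpace ℝ ι) :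
    c * ∑ k, ‖w k‖ ^ 2 ≤ ∫ x in (0 : ℝ)..1, ‖∑ k, lagB p τ k x • w k‖ ^ 2 := by
  have hcoord : ∀ x, ‖∑ k, lagB p τ k x • w k‖ ^ 2 = ∑ i, (∑ k, w k i * lagB p τ k x) ^ 2 :=
    fun x => by simp [EuclideanSpace.norm_sq_eq, mul_comm]
  have hint : ∀ i, IntervalIntegrable (fun x => (∑ k, w k i * lagB p τ k x) ^ 2) volume 0 1 :=
    fun i => by
      have := continuous_lagB p τ
      exact Continuous.intervalIntegrable (by fun_prop) _ _
  calc c * ∑ k, ‖w k‖ ^ 2 = ∑ i, c * ‖WithLp.toLp 2 (fun k => w k i)‖ ^ 2 := by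
        simp only [EuclideanSpace.norm_sq_eq, ← Finset.mul_sum]
        rw [Finset.sum_comm]
    _ ≤ ∑ i, lagrangeGramForm p τ (WithLp.toLp 2 (fun k => w k i)) :=
        Finset.sum_le_sum fun i _ => hgram _
    _ = ∫ x in (0 : ℝ)..1, ‖∑ k, lagB p τ k x • w k‖ ^ 2 := by
        simp only [hcoord, intervalIntegral.integral_finsetSum fun i _ => hint i]
        rfl

theorem mul_sum_norm_sq_le_integral_norm_sq_interpOn {c : ℝ}
    (hgram : ∀ v, c * ‖v‖ ^ 2 ≤ lagrangeGramForm p τ v) {N : ℕ}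
    (z : ℝ → EuclideanSpace ℝ (Fin N)) {a b : ℝ} (hab : a < b) :
    (b - a) * (c * ∑ k, ‖z (a + τ k * (b - a))‖ ^ 2)
      ≤ ∫ s in a..b, ‖interpOn p τ z a b s‖ ^ 2 := by
  rw [integral_norm_sq_interpOn z hab.ne]
  gcongr
  exact mul_sum_norm_sq_le_integral_norm_sq_sum_lagB hgram _

theorem mul_sum_norm_sq_le_sum_integral_norm_sq_interpOn {c : ℝ} (hc : 0 ≤ c)
    (hgram : ∀ v, c * ‖v‖ ^ 2 ≤ lagrangeGramForm p τ v) {N M : ℕ}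
    (z : ℝ → EuclideanSpace ℝ (Fin N)) {t : ℕ → ℝ} (ht : ∀ m < M, t m < t (m + 1)) {δ : ℝ}
    (hδ : ∀ m < M, δ ≤ t (m + 1) - t m) :
    δ * (c * ∑ m ∈ Finset.range M, ∑ k, ‖z (t m + τ k * (t (m + 1) - t m))‖ ^ 2)
      ≤ ∑ m ∈ Finset.range M, ∫ s in t m..t (m + 1), ‖interpOn p τ z (t m) (t (m + 1)) s‖ ^ 2 := by
  rw [Finset.mul_sum, Finset.mul_sum]
  refine Finset.sum_le_sum fun m hm => ?_
  rw [Finset.mem_range] at hm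
  calc _ ≤ (t (m + 1) - t m) * (c * ∑ k, ‖z (t m + τ k * (t (m + 1) - t m))‖ ^ 2) := by
        gcongr
        exact hδ m hm
    _ ≤ _ := mul_sum_norm_sq_le_integral_norm_sq_interpOn hgram z (ht m hm)

end Interpolation

section Rademacher

variable {Ω : Type*} [MeasurableSpace Ω] {P : Measure Ω} [IsProbabilityMeasure P] {X : Ω → ℝ}

def IsRademacher (X : Ω → ℝ) (P : Measure Ω) : Prop :=
  P {ω | X ω = 1} = 1 / 2 ∧ P {ω | X ω = -1} = 1 / 2

theorem IsRademacher.ae_eq_one_or_eq_neg_one (h : IsRademacher X P) (hX : Measurable X) :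
    ∀ᵐ ω ∂P, X ω = 1 ∨ X ω = -1 := by
  have hA : MeasurableSet {ω | X ω = 1} := hX (measurableSet_singleton 1)
  have hB : MeasurableSet {ω | X ω = -1} := hX (measurableSet_singleton (-1))
  have hAB : Disjoint {ω | X ω = 1} {ω | X ω = -1} :=
    Set.disjoint_left.mpr fun ω (h1 : X ω = 1) (h2 : X ω = -1) => by linarith
  have hunion : P ({ω | X ω = 1} ∪ {ω | X ω = -1}) = 1 := by
    rw [measure_union hAB hB, h.1, h.2, ENNReal.add_halves]
  exact (ae_iff_measure_eq (hA.union hB).nullMeasurableSet).mpr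
    (hunion.trans measure_univ.symm)

theorem IsRademacher.memLp (h : IsRademacher X P) (hX : Measurable X) (q : ENNReal) :
    MemLp X q P :=
  MemLp.of_bound hX.aestronglyMeasurable 1 <| by
    filter_upwards [h.ae_eq_one_or_eq_neg_one hX] with ω hω
    rcases hω with hω | hω <;> simp [hω]

theorem IsRademacher.integral_eq_zero (h : IsRademacher X P) (hX : Measurable X) :
    ∫ ω, X ω ∂P = 0 := by
  have hA : MeasurableSet {ω | X ω = 1} := hX (measurableSet_singleton 1)
  have hB : MeasurableSet {ω | X ω = -1} := hX (measurableSet_singleton (-1))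
  have hX_eq : X =ᵐ[P] fun ω =>
      {ω | X ω = 1}.indicator 1 ω - {ω | X ω = -1}.indicator (1 : Ω → ℝ) ω := by
    filter_upwards [h.ae_eq_one_or_eq_neg_one hX] with ω hω
    rcases hω with hω | hω <;> norm_num [Set.indicator, hω]
  rw [integral_congr_ae hX_eq, integral_sub ((integrable_const 1).indicator hA)
    ((integrable_const 1).indicator hB), Pi.one_def, integral_indicator_const _ hA,
    integral_indicator_const _ hB, measureReal_def, measureReal_def, h.1, h.2, sub_self]

theorem IsRademacher.integral_sq (h : IsRademacher X P) (hX : Measurable X) :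
    ∫ ω, X ω ^ 2 ∂P = 1 := by
  rw [integral_congr_ae (g := fun _ => 1), integral_const, probReal_univ, smul_eq_mul, mul_one]
  filter_upwards [h.ae_eq_one_or_eq_neg_one hX] with ω hω
  rcases hω with hω | hω <;> simp [hω]

theorem IsRademacher.variance_eq_one (h : IsRademacher X P) (hX : Measurable X) :
    variance X P = 1 := by
  rw [variance_of_integral_eq_zero hX.aemeasurable (h.integral_eq_zero hX), h.integral_sq hX]

theorem integral_sq_sum_mul_rademacher {ι : Type*} (s : Finset ι) (a : ι → ℝ)
    {Y : ι → Ω → ℝ} (hY : ∀ i ∈ s, IsRademacher (Y i) P) (hmeas : ∀ i ∈ s, Measurable (Y i))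
    (hindep : Set.Pairwise s fun i j => IndepFun (Y i) (Y j) P) :
    ∫ ω, (∑ i ∈ s, a i * Y i ω) ^ 2 ∂P = ∑ i ∈ s, a i ^ 2 := by
  set Z : ι → Ω → ℝ := fun i ω => a i * Y i ω
  have hZmeas : AEMeasurable (∑ i ∈ s, Z i) P :=
    Finset.aemeasurable_sum _ fun i hi => ((hmeas i hi).const_mul (a i)).aemeasurable
  have hZmean : ∫ ω, (∑ i ∈ s, Z i) ω ∂P = 0 := by
    simp only [Finset.sum_apply, Z]
    rw [integral_finsetSum _ fun i hi => ((hY i hi).memLp (hmeas i hi) 1).integrable le_rfl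
      |>.const_mul (a i)]
    exact Finset.sum_eq_zero fun i hi => by
      rw [integral_const_mul, (hY i hi).integral_eq_zero (hmeas i hi), mul_zero]
  have hZindep : Set.Pairwise s fun i j => IndepFun (Z i) (Z j) P := fun i hi j hj hij =>
    (hindep hi hj hij).comp (measurable_const_mul (a i)) (measurable_const_mul (a j))
  calc ∫ ω, (∑ i ∈ s, a i * Y i ω) ^ 2 ∂P = variance (∑ i ∈ s, Z i) P := by
        simp [variance_of_integral_eq_zero hZmeas hZmean, Z]
    _ = ∑ i ∈ s, variance (Z i) P :=
        IndepFun.variance_sum (fun i hi => ((hY i hi).memLp (hmeas i hi) 2).const_mul (a i))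
          hZindep
    _ = ∑ i ∈ s, a i ^ 2 := Finset.sum_congr rfl fun i hi => by
        rw [variance_const_mul, (hY i hi).variance_eq_one (hmeas i hi), mul_one]

theorem integral_sq_sum_inner_rademacher {κ ι : Type*} [Fintype κ] [Fintype ι] (M : ℕ) (ε : ℝ)
    (w : ℕ → κ → EuclideanSpace ℝ ι) {X : ℕ → κ → ι → Ω → ℝ}
    (hX : ∀ m < M, ∀ k i, IsRademacher (X m k i) P)
    (hmeas : ∀ m < M, ∀ k i, Measurable (X m k i))
    (hindep : ∀ m m' k k' i i', m < M → m' < M → (m, k, i) ≠ (m', k', i') →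
      IndepFun (X m k i) (X m' k' i') P) :
    ∫ ω, (∑ m ∈ Finset.range M, ∑ k, ⟪w m k, WithLp.toLp 2 fun i => ε * X m k i ω⟫_ℝ) ^ 2 ∂P
      = ε ^ 2 * ∑ m ∈ Finset.range M, ∑ k, ‖w m k‖ ^ 2 := by
  set s := Finset.range M ×ˢ (Finset.univ : Finset (κ × ι))
  have hs : ∀ q ∈ s, q.1 < M := fun q hq => Finset.mem_range.mp (Finset.mem_product.mp hq).1
  have hsum : ∀ ω, ∑ m ∈ Finset.range M, ∑ k, ⟪w m k, WithLp.toLp 2 fun i => ε * X m k i ω⟫_ℝ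
      = ∑ q ∈ s, ε * w q.1 q.2.1 q.2.2 * X q.1 q.2.1 q.2.2 ω := fun ω => by
    simp only [s, Finset.sum_product, Fintype.sum_prod_type, PiLp.inner_apply,
      RCLike.inner_apply, conj_trivial]
    exact Finset.sum_congr rfl fun m _ => Finset.sum_congr rfl fun k _ =>
      Finset.sum_congr rfl fun i _ => by ring
  simp_rw [hsum]
  rw [integral_sq_sum_mul_rademacher s _ (fun q hq => hX _ (hs q hq) _ _)
    (fun q hq => hmeas _ (hs q hq) _ _)
    fun q hq r hr hqr => hindep _ _ _ _ _ _ (hs q hq) (hs r hr) hqr]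
  simp [s, Finset.sum_product, Fintype.sum_prod_type, EuclideanSpace.norm_sq_eq,
    Finset.mul_sum, mul_pow]

end Rademacher

/-- **Theorem 3 (root-mean-square bound on the computational error under a random
round-off model).** If the components of the discrete residuals are pairwise independent
random signs scaled by `ε`, i.e. `(R̄_k^m)_i = ε X_{mki}` with `X_{mki} = ±1` with
probability `1/2` each, then for `E_C = Σ_m Σ_k ⟨z(t_{m−1} + τ_k Δt_m), R̄_k^m⟩` one has
`E[E_C²] = ε² Σ_m Σ_k ‖z(t_{m−1} + τ_k Δt_m)‖²` and consequently
`(E[E_C²])^{1/2} ≤ √C_p' · (ε / √(min_m Δt_m)) · (∫₀ᵀ ‖πz‖² dt)^{1/2}`. -/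
theorem rms_computational_error_bound (p : ℕ) (τ : Fin (p + 1) → ℝ)
    (hτ : StrictMono τ) (hτ0 : 0 ≤ τ 0) (hτ1 : τ (Fin.last p) ≤ 1) :
    ∃ Cp' : ℝ,
      ∀ (N M : ℕ) (hM : 0 < M) (T : ℝ)
        (t : ℕ → ℝ) (_ht0 : t 0 = 0) (_htM : t M = T)
        (_htlt : ∀ m < M, t m < t (m + 1))
        (z : ℝ → EuclideanSpace ℝ (Fin N)) (_hz : ContinuousOn z (Set.Icc 0 T))
        (ε : ℝ) (_hε : 0 < ε)
        (Ω : Type) (_mΩ : MeasurableSpace Ω) (P : Measure Ω)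
        (_hP : IsProbabilityMeasure P)
        (X : ℕ → Fin (p + 1) → Fin N → Ω → ℝ)
        (_hmeas : ∀ m k i, Measurable (X m k i))
        (_hdist : ∀ m < M, ∀ (k : Fin (p + 1)) (i : Fin N),
          P {ω | X m k i ω = 1} = 1 / 2 ∧ P {ω | X m k i ω = -1} = 1 / 2)
        (_hindep : ∀ (m m' : ℕ) (k k' : Fin (p + 1)) (i i' : Fin N),
          m < M → m' < M → (m, k, i) ≠ (m', k', i') →
          ProbabilityTheory.IndepFun (X m k i) (X m' k' i') P),
        let Rbar : ℕ → Fin (p + 1) → Ω → EuclideanSpace ℝ (Fin N) :=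
          fun m k ω => (WithLp.toLp 2 (fun i => ε * X m k i ω) : EuclideanSpace ℝ (Fin N))
        let EC : Ω → ℝ := fun ω => ∑ m ∈ Finset.range M,
          ∑ k, ⟪z (t m + τ k * (t (m + 1) - t m)), Rbar m k ω⟫_ℝ
        (∫ ω, EC ω ^ 2 ∂P
            = ε ^ 2 * ∑ m ∈ Finset.range M,
                ∑ k : Fin (p + 1), ‖z (t m + τ k * (t (m + 1) - t m))‖ ^ 2)
        ∧ Real.sqrt (∫ ω, EC ω ^ 2 ∂P)
            ≤ Real.sqrt Cp'
              * (ε / Real.sqrt ((Finset.range M).inf'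
                    (Finset.nonempty_range_iff.mpr hM.ne') fun m => t (m + 1) - t m))
              * Real.sqrt (∑ m ∈ Finset.range M,
                  ∫ s in t m..t (m + 1), ‖interpOn p τ z (t m) (t (m + 1)) s‖ ^ 2) := by
  obtain ⟨c, hc, hgram⟩ := exists_pos_mul_norm_sq_le_lagrangeGramForm hτ hτ0 hτ1
  refine ⟨c⁻¹, fun N M hM T t _ _ htlt z _ ε hε Ω _ P _ X hmeas hdist hindep => ?_⟩
  intro Rbar EC
  have hmom : ∫ ω, EC ω ^ 2 ∂P = ε ^ 2 * ∑ m ∈ Finset.range M,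
      ∑ k, ‖z (t m + τ k * (t (m + 1) - t m))‖ ^ 2 :=
    integral_sq_sum_inner_rademacher M ε _ hdist (fun m _ => hmeas m) hindep
  refine ⟨hmom, ?_⟩
  set δ := (Finset.range M).inf' (Finset.nonempty_range_iff.mpr hM.ne') fun m => t (m + 1) - t m
  have hδ : 0 < δ := (Finset.lt_inf'_iff _).mpr fun m hm =>
    sub_pos.mpr (htlt m (Finset.mem_range.mp hm))
  have hI := mul_sum_norm_sq_le_sum_integral_norm_sq_interpOn hc.le hgram z htlt (δ := δ)
    fun m hm => Finset.inf'_le _ (Finset.mem_range.mpr hm)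
  rw [hmom, Real.sqrt_mul (sq_nonneg ε), Real.sqrt_sq hε.le]
  set S := ∑ m ∈ Finset.range M, ∑ k, ‖z (t m + τ k * (t (m + 1) - t m))‖ ^ 2
  calc ε * √S = √c⁻¹ * (ε / √δ) * √(δ * (c * S)) := by
        rw [Real.sqrt_mul hδ.le, Real.sqrt_mul hc.le, Real.sqrt_inv]
        field_simp
    _ ≤ _ := by gcongr
end
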